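/- Let E be a small category and φ : Eᵒᵖ ⥤ Set a weight. If the canonical map can : Colim_φ(e ↦ Nat(φ, E(−, e))) → Nat(φ, φ) — sending the class represented by (e, x ∈ φ(e), τ : φ ⟶ E(−, e)) to x̂ ∘ τ, where x̂ : E(−, e) ⟶ φ corresponds to x under the Yoneda lemma — is a bijection, then Colim_φ preserves the ψ-weighted limit of every diagram G : Dᵒᵖ ⥤ (E ⥤ Set), for every weight ψ : Dᵒᵖ ⥤ Set whatsoever. In particular, the class of all weights (over Set) is sound. -/

import Mathlib

open CategoryTheory CategoryTheory.Limits Opposite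

namespace Paper

/-- The category of elements `el(φ)` of a weight `φ : Eᵒᵖ ⥤ Type`:
objects are pairs `(e, x)` with `x ∈ φ(e)`, a morphism `(e,x) → (e',x')` is
`t : e ⟶ e'` with `φ(t)(x') = x`. -/
abbrev elCat {E : Type} [SmallCategory E] (φ : Eᵒᵖ ⥤ Type) : Type :=
  (Functor.Elements φ)ᵒᵖ

/-- The projection `p : el(φ) ⥤ E`. -/
def elProj {E : Type} [SmallCategory E] (φ : Eᵒᵖ ⥤ Type) : elCat φ ⥤ E :=
  (CategoryOfElements.π φ).leftOp

/-- The object `(e, x)` of `el(φ)`. -/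
def elObj {E : Type} [SmallCategory E] (φ : Eᵒᵖ ⥤ Type) (e : E) (x : φ.obj (op e)) :
    elCat φ :=
  op ⟨op e, x⟩

/-- The `φ`-weighted colimit functor `Colim_φ : (E ⥤ Set) ⥤ Set`,
sending `F` to the colimit of `p ⋙ F` where `p : el(φ) ⥤ E`. -/
noncomputable def wColim {E : Type} [SmallCategory E] (φ : Eᵒᵖ ⥤ Type) :
    (E ⥤ Type) ⥤ Type :=
  (Functor.whiskeringLeft (elCat φ) E Type).obj (elProj φ) ⋙ colim

/-- The `ψ`-weighted limit of a diagram `G : Dᵒᵖ ⥤ (E ⥤ Set)`, computed pointwise: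
`(Lim_ψ G)(e) = Nat(ψ, G(−)(e))`. -/
def wLim {D E : Type} [SmallCategory D] [SmallCategory E]
    (ψ : Dᵒᵖ ⥤ Type) (G : Dᵒᵖ ⥤ E ⥤ Type) : E ⥤ Type :=
  G.flip ⋙ coyoneda.obj (op ψ)

/-- Evaluation of the weighted limit at `y ∈ ψ(d)`. -/
def wLimEval {D E : Type} [SmallCategory D] [SmallCategory E]
    (ψ : Dᵒᵖ ⥤ Type) (G : Dᵒᵖ ⥤ E ⥤ Type) (d : Dᵒᵖ) (y : ψ.obj d) :
    wLim ψ G ⟶ G.obj d where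
  app e := TypeCat.ofHom fun α => α.app d y
  naturality e e' f := rfl

/-- The canonical comparison `H(Lim_ψ G) → Nat(ψ, H ∘ G)` for a functor
`H : (E ⥤ Set) ⥤ Set`.  `H` preserves the `ψ`-weighted limit of `G` precisely
when this map is a bijection. -/
def wLimComparison {D E : Type} [SmallCategory D] [SmallCategory E]
    (H : (E ⥤ Type) ⥤ Type) (ψ : Dᵒᵖ ⥤ Type) (G : Dᵒᵖ ⥤ E ⥤ Type) :
    H.obj (wLim ψ G) → (ψ ⟶ G ⋙ H) := fun z =>
  { app := fun d => TypeCat.ofHom fun y => H.map (wLimEval ψ G d y) z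
    naturality := fun d d' g => by
      ext y
      have h : wLimEval ψ G d' (ψ.map g y) = wLimEval ψ G d y ≫ G.map g := by
        ext e α
        exact types_congr_hom (α.naturality g) y
      change H.map (wLimEval ψ G d' (ψ.map g y)) z =
        (H.map (G.map g)) (H.map (wLimEval ψ G d y) z)
      rw [h, H.map_comp]
      rfl }

/-- A bundled weight: a small category `D` together with a functor `Dᵒᵖ ⥤ Set`. -/
structure Weight : Type 1 where
  D : Type
  [instD : SmallCategory D]
  w : D ᵒᵖ ⥤ Type

attribute [instance] Weight.instD

/-- A class of weights. -/
abbrev WeightClass : Type 1 := Weight → Prop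

/-- A weight `φ : Eᵒᵖ ⥤ Set` is `Ψ`-flat if `Colim_φ` preserves the `ψ`-weighted
limit of every diagram `G : Dᵒᵖ ⥤ (E ⥤ Set)`, for every `ψ` in `Ψ`. -/
def IsFlat (Ψ : WeightClass) {E : Type} [SmallCategory E] (φ : Eᵒᵖ ⥤ Type) : Prop :=
  ∀ W : Weight, Ψ W → ∀ G : W.Dᵒᵖ ⥤ E ⥤ Type,
    Function.Bijective (wLimComparison (wColim φ) W.w G)

/-- `Ψ` is sound if every weight `φ` is `Ψ`-flat as soon as `Colim_φ` preserves
the `ψ`-weighted limits of all representable-valued diagrams `d ↦ E(T d, −)`. -/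
def IsSound (Ψ : WeightClass) : Prop :=
  ∀ (E : Type) [SmallCategory E] (φ : Eᵒᵖ ⥤ Type),
    (∀ W : Weight, Ψ W → ∀ T : W.D ⥤ E,
      Function.Bijective (wLimComparison (wColim φ) W.w (T.op ⋙ coyoneda))) →
    IsFlat Ψ φ



/-- The cocone defining the canonical map
`Colim_φ (e ↦ Nat(ψ', E(−,e))) → Nat(ψ', φ)`. -/
def canCocone {E : Type} [SmallCategory E] (φ ψ' : Eᵒᵖ ⥤ Type) :
    Cocone (elProj φ ⋙ (yoneda ⋙ coyoneda.obj (op ψ'))) where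
  pt := ψ' ⟶ φ
  ι :=
    { app := fun j => TypeCat.ofHom fun τ => τ ≫ yonedaEquiv.symm j.unop.2
      naturality := fun j j' f => by
        ext τ
        change (τ ≫ yoneda.map f.unop.val.unop) ≫ yonedaEquiv.symm j'.unop.2 =
          τ ≫ yonedaEquiv.symm j.unop.2
        rw [Category.assoc]
        congr 1
        have := yonedaEquiv_symm_map f.unop.val j'.unop.2
        rw [f.unop.property] at this
        exact this.symm }

/-- The canonical map `can : Colim_φ (e ↦ Nat(ψ', E(−,e))) → Nat(ψ', φ)`,
sending the class of `(e, x ∈ φ(e), τ : ψ' ⟶ E(−,e))` to `x̂ ∘ τ`, where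
`x̂ : E(−,e) ⟶ φ` corresponds to `x` under the Yoneda lemma. -/
noncomputable def canMap {E : Type} [SmallCategory E] (φ ψ' : Eᵒᵖ ⥤ Type) :
    (wColim φ).obj (yoneda ⋙ coyoneda.obj (op ψ')) → (ψ' ⟶ φ) :=
  ⇑(colimit.desc (elProj φ ⋙ (yoneda ⋙ coyoneda.obj (op ψ'))) (canCocone φ ψ'))

/-!
If `can` sends the class of `(e₀, x₀, τ)` to `𝟙 φ`, then `τ : φ ⟶ E(−, e₀)` and
`x̂₀ : E(−, e₀) ⟶ φ` exhibit `φ` as a retract of a representable. Consequently `Colim_φ` is a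
retract of evaluation at `e₀`: the retraction sends `y ∈ F(e₀)` to the class of `((e₀, x₀), y)`.
Evaluation preserves the pointwise weighted limits, and the comparison map depends functorially
on `H`, so the comparison map of `Colim_φ` is a retract of a bijection.

For soundness, preservation of the `φ`-weighted limit of `d ↦ E(d, −)` gives a preimage of the
co-Yoneda unit `φ ⟶ Colim_φ E(−, −)`. Since `can` is this comparison map followed by the
co-Yoneda counit `Colim_φ E(d, −) → φ(d)`, that preimage is sent to `𝟙 φ` by `can`.
-/

section Comparison

variable {D E : Type} [SmallCategory D] [SmallCategory E] (ψ : Dᵒᵖ ⥤ Type) (G : Dᵒᵖ ⥤ E ⥤ Type)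

def wLimComparisonArrow : ((E ⥤ Type) ⥤ Type) ⥤ Arrow Type where
  obj H := Arrow.mk (TypeCat.ofHom (wLimComparison H ψ G))
  map {H H'} α := Arrow.homMk (α.app (wLim ψ G))
    (TypeCat.ofHom fun η => η ≫ Functor.whiskerLeft G α) (by
      ext z
      apply NatTrans.ext
      funext d
      ext y
      exact (types_congr_hom (α.naturality (wLimEval ψ G d y)) z).symm)

theorem wLimComparison_bijective_of_retract {H H' : (E ⥤ Type) ⥤ Type} (ρ : Retract H H')
    (h' : Function.Bijective (wLimComparison H' ψ G)) :
    Function.Bijective (wLimComparison H ψ G) :=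
  (isIso_iff_bijective (TypeCat.ofHom _)).mp <|
    MorphismProperty.of_retract (P := .isomorphisms Type) (ρ.map (wLimComparisonArrow ψ G))
      ((isIso_iff_bijective (TypeCat.ofHom _)).mpr h')

theorem wLimComparison_evaluation_bijective (e : E) :
    Function.Bijective (wLimComparison ((evaluation E Type).obj e) ψ G) := by
  refine ⟨fun α β h => ?_, fun η =>
    ⟨{ app d := TypeCat.ofHom (η.app d), naturality d d' g := η.naturality g }, rfl⟩⟩
  refine NatTrans.ext (funext fun d => ?_)
  ext y
  exact types_congr_hom (NatTrans.congr_app h d) y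

end Comparison

section RetractOfRepresentable

variable {E : Type} [SmallCategory E] {φ : Eᵒᵖ ⥤ Type} {e₀ : E}

lemma wColim_map_ι {F F' : E ⥤ Type} (α : F ⟶ F') (j : elCat φ)
    (y : F.obj ((elProj φ).obj j)) :
    (wColim φ).map α (colimit.ι (elProj φ ⋙ F) j y) =
      colimit.ι (elProj φ ⋙ F') j (α.app ((elProj φ).obj j) y) :=
  colimit.ι_map_apply (Functor.whiskerLeft (elProj φ) α) j y

def evalCocone (τ : φ ⟶ yoneda.obj e₀) (F : E ⥤ Type) : Cocone (elProj φ ⋙ F) where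
  pt := F.obj e₀
  ι :=
    { app j := F.map (τ.app j.unop.1 j.unop.2)
      naturality j j' f := by
        have hτ : τ.app j.unop.1 j.unop.2 = f.unop.val.unop ≫ τ.app j'.unop.1 j'.unop.2 := by
          have := NatTrans.naturality_apply τ f.unop.val j'.unop.2
          rwa [f.unop.property] at this
        change F.map f.unop.val.unop ≫ F.map _ = F.map _ ≫ 𝟙 _
        rw [hτ, F.map_comp, Category.comp_id] }

noncomputable def wColimToEval (τ : φ ⟶ yoneda.obj e₀) :
    wColim φ ⟶ (evaluation E Type).obj e₀ where
  app F := colimit.desc (elProj φ ⋙ F) (evalCocone τ F)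
  naturality F F' α := colimit.hom_ext fun j => by
    simp only [Functor.whiskeringLeft_obj_obj, Functor.comp_obj, evaluation_obj_obj, wColim,
      colim_obj, Functor.comp_map, Functor.whiskeringLeft_obj_map, colim_map, evalCocone,
      colimit.map_desc, colimit.ι_desc, Cocone.precompose_obj_ι, NatTrans.comp_app,
      Functor.whiskerLeft_app, evaluation_obj_map, colimit.ι_desc_assoc]
    exact (α.naturality _).symm

lemma wColimToEval_ι (τ : φ ⟶ yoneda.obj e₀) (F : E ⥤ Type) (j : elCat φ)
    (y : F.obj ((elProj φ).obj j)) :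
    (wColimToEval τ).app F (colimit.ι (elProj φ ⋙ F) j y) = F.map (τ.app j.unop.1 j.unop.2) y :=
  colimit.ι_desc_apply (evalCocone τ F) j y

noncomputable def evalToWColim (x₀ : φ.obj (op e₀)) : (evaluation E Type).obj e₀ ⟶ wColim φ where
  app F := colimit.ι (elProj φ ⋙ F) (elObj φ e₀ x₀)
  naturality _ _ α := (colimit.ι_map (Functor.whiskerLeft (elProj φ) α) (elObj φ e₀ x₀)).symm

noncomputable def wColimRetractEval (ρ : Retract φ (yoneda.obj e₀)) :
    Retract (wColim φ) ((evaluation E Type).obj e₀) where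
  i := wColimToEval ρ.i
  r := evalToWColim (yonedaEquiv ρ.r)
  retract := by
    ext F w
    obtain ⟨j, y, rfl⟩ := Types.jointly_surjective' (F := elProj φ ⋙ F) w
    have hx : φ.map (ρ.i.app j.unop.1 j.unop.2).op (yonedaEquiv ρ.r) = j.unop.2 :=
      (map_yonedaEquiv' ρ.r _).trans (types_congr_hom (NatTrans.congr_app ρ.retract _) _)
    let m : j ⟶ elObj φ e₀ (yonedaEquiv ρ.r) :=
      Quiver.Hom.op ⟨(ρ.i.app j.unop.1 j.unop.2).op, hx⟩
    change colimit.ι (elProj φ ⋙ F) (elObj φ e₀ (yonedaEquiv ρ.r))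
      ((wColimToEval ρ.i).app F (colimit.ι (elProj φ ⋙ F) j y)) = _
    rw [wColimToEval_ι]
    exact colimit.w_apply (elProj φ ⋙ F) m y

theorem wLimComparison_wColim_bijective_of_retract (ρ : Retract φ (yoneda.obj e₀))
    {D : Type} [SmallCategory D] (ψ : Dᵒᵖ ⥤ Type) (G : Dᵒᵖ ⥤ E ⥤ Type) :
    Function.Bijective (wLimComparison (wColim φ) ψ G) :=
  wLimComparison_bijective_of_retract ψ G (wColimRetractEval ρ)
    (wLimComparison_evaluation_bijective ψ G e₀)

end RetractOfRepresentable

section CanonicalMap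

variable {E : Type} [SmallCategory E] {φ : Eᵒᵖ ⥤ Type}

lemma canMap_ι (ψ' : Eᵒᵖ ⥤ Type) (j : elCat φ) (τ : ψ' ⟶ yoneda.obj ((elProj φ).obj j)) :
    canMap φ ψ' (colimit.ι (elProj φ ⋙ yoneda ⋙ coyoneda.obj (op ψ')) j τ) =
      τ ≫ yonedaEquiv.symm j.unop.2 :=
  colimit.ι_desc_apply (canCocone φ ψ') j τ

theorem exists_retract_yoneda_of_canMap_eq_id
    {z : (wColim φ).obj (yoneda ⋙ coyoneda.obj (op φ))} (hz : canMap φ φ z = 𝟙 φ) :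
    ∃ e₀ : E, Nonempty (Retract φ (yoneda.obj e₀)) := by
  obtain ⟨j, τ, rfl⟩ :=
    Types.jointly_surjective' (F := elProj φ ⋙ yoneda ⋙ coyoneda.obj (op φ)) z
  exact ⟨j.unop.1.unop,
    ⟨Retract.mk τ (yonedaEquiv.symm j.unop.2) ((canMap_ι φ j τ).symm.trans hz)⟩⟩

variable (φ) in
def coyonedaCocone (d : Eᵒᵖ) : Cocone (elProj φ ⋙ coyoneda.obj d) where
  pt := φ.obj d
  ι :=
    { app j := TypeCat.ofHom fun g => φ.map g.op j.unop.2
      naturality j j' f := by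
        ext g
        change φ.map (g ≫ f.unop.val.unop).op j'.unop.2 = φ.map g.op j.unop.2
        exact (φ.map_comp_apply f.unop.val g.op j'.unop.2).trans
          (congrArg (φ.map g.op) f.unop.property) }

lemma coyonedaCocone_desc_ι (d : Eᵒᵖ) (j : elCat φ) (g : d.unop ⟶ (elProj φ).obj j) :
    colimit.desc _ (coyonedaCocone φ d) (colimit.ι (elProj φ ⋙ coyoneda.obj d) j g) =
      φ.map g.op j.unop.2 :=
  colimit.ι_desc_apply (coyonedaCocone φ d) j g

variable (φ) in
noncomputable def coyonedaUnit : φ ⟶ ((𝟭 E).op ⋙ coyoneda) ⋙ wColim φ where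
  app d := TypeCat.ofHom fun x =>
    colimit.ι (elProj φ ⋙ coyoneda.obj d) (elObj φ d.unop x) (𝟙 d.unop)
  naturality d d' g := by
    ext x
    let m : elObj φ d'.unop (φ.map g x) ⟶ elObj φ d.unop x := Quiver.Hom.op ⟨g, rfl⟩
    change colimit.ι (elProj φ ⋙ coyoneda.obj d') (elObj φ d'.unop (φ.map g x)) (𝟙 d'.unop) =
      (wColim φ).map (coyoneda.map g)
        (colimit.ι (elProj φ ⋙ coyoneda.obj d) (elObj φ d.unop x) (𝟙 d.unop))
    refine (colimit.w_apply (elProj φ ⋙ coyoneda.obj d') m (𝟙 d'.unop)).symm.trans ?_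
    refine Eq.trans ?_ (wColim_map_ι (coyoneda.map g) (elObj φ d.unop x) (𝟙 d.unop)).symm
    exact congrArg (colimit.ι (elProj φ ⋙ coyoneda.obj d') (elObj φ d.unop x))
      ((Category.id_comp _).trans (Category.comp_id _).symm)

theorem canMap_app (ψ' : Eᵒᵖ ⥤ Type) (z : (wColim φ).obj (yoneda ⋙ coyoneda.obj (op ψ')))
    (d : Eᵒᵖ) (x : ψ'.obj d) :
    (canMap φ ψ' z).app d x = colimit.desc _ (coyonedaCocone φ d)
      ((wLimComparison (wColim φ) ψ' ((𝟭 E).op ⋙ coyoneda) z).app d x) := by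
  obtain ⟨j, τ, rfl⟩ :=
    Types.jointly_surjective' (F := elProj φ ⋙ yoneda ⋙ coyoneda.obj (op ψ')) z
  rw [canMap_ι]
  exact (coyonedaCocone_desc_ι d j (τ.app d x)).symm.trans
    (congrArg _ (wColim_map_ι (wLimEval ψ' ((𝟭 E).op ⋙ coyoneda) d x) j τ).symm)

theorem exists_canMap_eq_id_of_surjective
    (hs : Function.Surjective (wLimComparison (wColim φ) φ ((𝟭 E).op ⋙ coyoneda))) :
    ∃ z, canMap φ φ z = 𝟙 φ := by
  obtain ⟨z, hz⟩ := hs (coyonedaUnit φ)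
  refine ⟨z, NatTrans.ext (funext fun d => ?_)⟩
  ext x
  refine (canMap_app φ z d x).trans ?_
  rw [hz]
  exact (coyonedaCocone_desc_ι d (elObj φ d.unop x) (𝟙 d.unop)).trans (φ.map_id_apply d x)

theorem wLimComparison_wColim_bijective_of_canMap_eq_id
    {z : (wColim φ).obj (yoneda ⋙ coyoneda.obj (op φ))} (hz : canMap φ φ z = 𝟙 φ)
    {D : Type} [SmallCategory D] (ψ : Dᵒᵖ ⥤ Type) (G : Dᵒᵖ ⥤ E ⥤ Type) :
    Function.Bijective (wLimComparison (wColim φ) ψ G) := by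
  obtain ⟨e₀, ⟨ρ⟩⟩ := exists_retract_yoneda_of_canMap_eq_id hz
  exact wLimComparison_wColim_bijective_of_retract ρ ψ G

end CanonicalMap

/-- If the canonical coend map
`can : Colim_φ(e ↦ Nat(φ, E(−,e))) → Nat(φ, φ)` is a bijection, then `Colim_φ`
preserves the `ψ`-weighted limit of every diagram `G : Dᵒᵖ ⥤ (E ⥤ Set)` for
*every* weight `ψ` whatsoever.  In particular, the class of all weights is sound. -/
theorem flatness_from_single_canonical_map
    (E : Type) [SmallCategory E] (φ : Eᵒᵖ ⥤ Type)
    (h : Function.Bijective (canMap φ φ)) :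
    (∀ (D : Type) [SmallCategory D] (ψ : Dᵒᵖ ⥤ Type) (G : Dᵒᵖ ⥤ E ⥤ Type),
      Function.Bijective (wLimComparison (wColim φ) ψ G)) ∧
    IsSound (fun _ : Weight => True) := by
  obtain ⟨z, hz⟩ := h.2 (𝟙 φ)
  refine ⟨fun D _ ψ G => wLimComparison_wColim_bijective_of_canMap_eq_id hz ψ G, ?_⟩
  intro E' _ φ' hrep W _ G
  obtain ⟨z', hz'⟩ := exists_canMap_eq_id_of_surjective (hrep ⟨E', φ'⟩ trivial (𝟭 E')).2
  exact wLimComparison_wColim_bijective_of_canMap_eq_id hz' W.w G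

end Paper
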